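/- Let C be a set of order constraints on x_1,...,x_n whose partial order has N linear extensions, and suppose the expected rank of x_i under the uniform distribution on the admissible polytope is r (i.e., r = (1/N)·Σ over linear extensions T of the rank of x_i in T). Then the expected value of x_i under the uniform distribution on the admissible polytope equals r/(n+1). -/

import Mathlib

/-!
Off the null set where two coordinates coincide, a point of the cube lies in exactly one order
simplex `x_{σ 1} ≤ ⋯ ≤ x_{σ n}`, and all `n!` simplices have the same volume. Hence the
admissible polytope of `C` has volume `N / n!`, `N` being the number of linear extensions.

For the integral, adjoin a variable `t` with `0 ≤ t ≤ x_i`: the volume under the graph of `x_i`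
is the volume of the admissible polytope of `C` together with the constraint `t ≤ x_i`. A linear
extension of the enlarged order is a linear extension `σ` of `C` with `t` inserted at one of the
`rank_σ(x_i)` positions below `x_i`, so `∫ x_i = (∑_σ rank_σ(x_i)) / (n+1)! = N r / (n+1)!`.
-/

open MeasureTheory Set Function
open scoped Finset

section NullSets

variable {ι : Type*} [Fintype ι]

lemma volume_setOf_linearMap_eq_zero {L : (ι → ℝ) →ₗ[ℝ] ℝ} (hL : L ≠ 0) :
    volume {x : ι → ℝ | L x = 0} = 0 :=
  Measure.addHaar_submodule _ (LinearMap.ker L) (mt LinearMap.ker_eq_top.1 hL)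

lemma volume_setOf_apply_eq_zero (a : ι) : volume {x : ι → ℝ | x a = 0} = 0 := by
  classical
  refine volume_setOf_linearMap_eq_zero (L := LinearMap.proj a) fun h => ?_
  simpa using LinearMap.congr_fun h (Pi.single a 1)

lemma volume_setOf_apply_eq_apply {a b : ι} (hab : a ≠ b) :
    volume {x : ι → ℝ | x a = x b} = 0 := by
  classical
  have hL : LinearMap.proj (R := ℝ) (φ := fun _ : ι => ℝ) a - LinearMap.proj b ≠ 0 :=
    fun h => by simpa [hab.symm] using LinearMap.congr_fun h (Pi.single a 1)
  simpa [sub_eq_zero] using volume_setOf_linearMap_eq_zero hL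

lemma volume_setOf_not_injective : volume {x : ι → ℝ | ¬ Injective x} = 0 := by
  refine measure_mono_null (fun x hx => ?_) (measure_iUnion_null fun a =>
    measure_iUnion_null fun b => measure_iUnion_null fun (hab : a ≠ b) =>
      volume_setOf_apply_eq_apply hab)
  obtain ⟨a, b, hxab, hab⟩ : ∃ a b, x a = x b ∧ a ≠ b := by
    simpa [Injective] using hx
  exact mem_iUnion₂.2 ⟨a, b, mem_iUnion.2 ⟨hab, hxab⟩⟩

end NullSets

section OrderPolytope

variable {m : ℕ}

/-- `σ` lists the coordinates in increasing order, so `σ.symm j` is the rank of `x j`, counted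
from `0`. -/
def orderSimplex (σ : Equiv.Perm (Fin m)) : Set (Fin m → ℝ) :=
  {x | (∀ j, x j ∈ Icc (0:ℝ) 1) ∧ Monotone (x ∘ σ)}

lemma isClosed_orderSimplex (σ : Equiv.Perm (Fin m)) : IsClosed (orderSimplex σ) := by
  rw [orderSimplex, ofPred_and, ofPred_forall]
  exact (isClosed_iInter fun j => isClosed_Icc.preimage (continuous_apply j)).inter
    (isClosed_monotone.preimage (by fun_prop : Continuous fun x : Fin m → ℝ => x ∘ σ))

lemma eq_sort_of_monotone_comp {α : Type*} [LinearOrder α] {x : Fin m → α} (hx : Injective x)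
    {σ : Equiv.Perm (Fin m)} (h : Monotone (x ∘ σ)) : σ = Tuple.sort x :=
  Tuple.eq_sort_iff.2 ⟨h, fun _ _ hab hxab => absurd (σ.injective (hx hxab)) hab.ne⟩

lemma aedisjoint_orderSimplex {σ τ : Equiv.Perm (Fin m)} (h : σ ≠ τ) :
    AEDisjoint volume (orderSimplex σ) (orderSimplex τ) := by
  refine measure_mono_null ?_ volume_setOf_not_injective
  rintro x ⟨hσ, hτ⟩ hx
  exact h <| (eq_sort_of_monotone_comp hx hσ.2).trans (eq_sort_of_monotone_comp hx hτ.2).symm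

lemma volume_orderSimplex_eq (σ τ : Equiv.Perm (Fin m)) :
    volume (orderSimplex σ) = volume (orderSimplex τ) := by
  set e := MeasurableEquiv.piCongrLeft (fun _ => ℝ) (τ.symm.trans σ)
  have hpre : e.symm ⁻¹' orderSimplex τ = orderSimplex σ := by
    have happ : ∀ x j, e.symm x j = x ((τ.symm.trans σ) j) := fun _ _ => rfl
    ext x
    simp only [orderSimplex, mem_preimage, mem_ofPred_eq, happ, comp_def, Equiv.trans_apply,
      Equiv.symm_apply_apply]
    exact and_congr_left' ((τ.symm.trans σ).forall_congr_right (q := fun j => x j ∈ Icc 0 1))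
  rw [← hpre, ((volume_measurePreserving_piCongrLeft _ _).symm e).measure_preimage
    (isClosed_orderSimplex τ).measurableSet.nullMeasurableSet]

def orderPolytope (C : Finset (Fin m × Fin m)) : Set (Fin m → ℝ) :=
  {x | (∀ j, x j ∈ Icc (0:ℝ) 1) ∧ ∀ p ∈ C, x p.1 ≤ x p.2}

def linearExtensions (C : Finset (Fin m × Fin m)) : Finset (Equiv.Perm (Fin m)) :=
  {σ | ∀ p ∈ C, σ.symm p.1 ≤ σ.symm p.2}

lemma isClosed_orderPolytope (C : Finset (Fin m × Fin m)) : IsClosed (orderPolytope C) := by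
  simp only [orderPolytope, ofPred_and, ofPred_forall]
  exact (isClosed_iInter fun j => isClosed_Icc.preimage (continuous_apply j)).inter
    (isClosed_iInter fun p => isClosed_iInter fun _ =>
      isClosed_le (continuous_apply p.1) (continuous_apply p.2))

lemma biUnion_orderSimplex_subset (C : Finset (Fin m × Fin m)) :
    ⋃ σ ∈ linearExtensions C, orderSimplex σ ⊆ orderPolytope C := by
  simp only [iUnion_subset_iff]
  rintro σ hσ x ⟨hcube, hmono⟩
  refine ⟨hcube, fun p hp => ?_⟩
  simpa using hmono ((Finset.mem_filter.1 hσ).2 p hp)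

lemma orderPolytope_diff_biUnion_orderSimplex_subset (C : Finset (Fin m × Fin m)) :
    orderPolytope C \ ⋃ σ ∈ linearExtensions C, orderSimplex σ ⊆ {x | ¬ Injective x} := by
  rintro x ⟨⟨hcube, hC⟩, hx⟩ hinj
  have hsort : StrictMono (x ∘ Tuple.sort x) :=
    (Tuple.monotone_sort x).strictMono_of_injective (hinj.comp (Tuple.sort x).injective)
  refine hx (mem_iUnion₂.2 ⟨Tuple.sort x, ?_, hcube, Tuple.monotone_sort x⟩)
  simp only [linearExtensions, Finset.mem_filter, Finset.mem_univ, true_and]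
  exact fun p hp => hsort.le_iff_le.1 (by simpa using hC p hp)

lemma volume_orderPolytope_eq_card_mul (C : Finset (Fin m × Fin m)) :
    volume (orderPolytope C) =
      #(linearExtensions C) * volume (orderSimplex (1 : Equiv.Perm (Fin m))) := by
  rw [← measure_eq_measure_of_null_sdiff (biUnion_orderSimplex_subset C)
      (measure_mono_null (orderPolytope_diff_biUnion_orderSimplex_subset C)
        volume_setOf_not_injective),
    measure_biUnion_finset₀ (fun _ _ _ _ h => aedisjoint_orderSimplex h)
      (fun σ _ => (isClosed_orderSimplex σ).measurableSet.nullMeasurableSet),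
    Finset.sum_congr rfl fun σ _ => volume_orderSimplex_eq σ 1, Finset.sum_const, nsmul_eq_mul]

lemma volume_orderSimplex (σ : Equiv.Perm (Fin m)) :
    volume (orderSimplex σ) = (m.factorial : ENNReal)⁻¹ := by
  have hcube : volume (orderPolytope (∅ : Finset (Fin m × Fin m))) = 1 := by
    have : orderPolytope (∅ : Finset (Fin m × Fin m)) = pi univ fun _ => Icc 0 1 := by
      ext; simp [orderPolytope, Pi.le_def, forall_and]
    simp [this, Real.volume_Icc_pi]
  have hall : linearExtensions (∅ : Finset (Fin m × Fin m)) = Finset.univ := by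
    ext; simp [linearExtensions]
  rw [volume_orderPolytope_eq_card_mul, hall, Finset.card_univ, Fintype.card_perm,
    Fintype.card_fin, mul_comm] at hcube
  rw [volume_orderSimplex_eq σ 1, ENNReal.eq_inv_of_mul_eq_one_left hcube]

lemma volume_orderPolytope (C : Finset (Fin m × Fin m)) :
    volume (orderPolytope C) = #(linearExtensions C) / m.factorial := by
  rw [volume_orderPolytope_eq_card_mul, volume_orderSimplex, div_eq_mul_inv]

/-- Coordinate `0` is the new variable `t`, the old coordinates are shifted by `Fin.succ`. -/
def liftConstraints (C : Finset (Fin m × Fin m)) (i : Fin m) :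
    Finset (Fin (m + 1) × Fin (m + 1)) :=
  insert (0, i.succ) (C.map ((Fin.succEmb m).prodMap (Fin.succEmb m)))

lemma forall_mem_liftConstraints {C : Finset (Fin m × Fin m)} {i : Fin m}
    (R : Fin (m + 1) → Fin (m + 1) → Prop) :
    (∀ p ∈ liftConstraints C i, R p.1 p.2) ↔
      R 0 i.succ ∧ ∀ p ∈ C, R p.1.succ p.2.succ := by
  simp only [liftConstraints, Finset.forall_mem_insert, Finset.forall_mem_map]
  rfl

lemma integrableOn_apply_orderPolytope (C : Finset (Fin m × Fin m)) (i : Fin m) :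
    IntegrableOn (fun x => x i) (orderPolytope C) :=
  ((continuous_apply i).integrableOn_Icc (a := 0) (b := 1)).mono_set fun _ hx =>
    ⟨fun j => (hx.1 j).1, fun j => (hx.1 j).2⟩

lemma integral_apply_orderPolytope (C : Finset (Fin m × Fin m)) (i : Fin m) :
    ∫ x in orderPolytope C, x i = (volume (orderPolytope (liftConstraints C i))).toReal := by
  set E : (Fin (m + 1) → ℝ) ≃ᵐ (Fin m → ℝ) × ℝ :=
    (MeasurableEquiv.piFinSuccAbove (fun _ => ℝ) 0).trans MeasurableEquiv.prodComm
  have hE : MeasurePreserving E volume (volume.prod volume) :=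
    Measure.measurePreserving_swap.comp (volume_preserving_piFinSuccAbove (fun _ => ℝ) 0)
  set region := regionBetween (fun _ => 0) (fun x => x i) (orderPolytope C)
  have hregion : volume.prod volume region = ENNReal.ofReal (∫ x in orderPolytope C, x i) := by
    simpa using volume_regionBetween_eq_integral integrableOn_zero
      (integrableOn_apply_orderPolytope C i) (isClosed_orderPolytope C).measurableSet
      (fun x hx => (hx.1 i).1)
  have hmem : ∀ y, y ∈ E ⁻¹' region ↔
      (fun t => y t.succ) ∈ orderPolytope C ∧ y 0 ∈ Ioo 0 (y i.succ) := fun _ => Iff.rfl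
  have hsub : E ⁻¹' region ⊆ orderPolytope (liftConstraints C i) := by
    intro y hy
    obtain ⟨⟨hcube, hC⟩, h0, hi⟩ := (hmem y).1 hy
    refine ⟨Fin.cases ⟨h0.le, hi.le.trans (hcube i).2⟩ hcube, ?_⟩
    exact forall_mem_liftConstraints (fun a b => y a ≤ y b) |>.2 ⟨hi.le, hC⟩
  have hdiff : orderPolytope (liftConstraints C i) \ E ⁻¹' region ⊆
      {y | y 0 = 0} ∪ {y | y 0 = y i.succ} := by
    rintro y ⟨⟨hcube, hC⟩, hy⟩
    obtain ⟨h0i, hC⟩ := forall_mem_liftConstraints (fun a b => y a ≤ y b) |>.1 hC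
    by_contra hne
    simp only [mem_union, mem_ofPred_eq, not_or] at hne
    exact hy ((hmem y).2 ⟨⟨fun t => hcube t.succ, hC⟩,
      (hcube 0).1.lt_of_ne (Ne.symm hne.1), h0i.lt_of_ne hne.2⟩)
  rw [← measure_eq_measure_of_null_sdiff hsub (measure_mono_null hdiff (measure_union_null
      (volume_setOf_apply_eq_zero 0) (volume_setOf_apply_eq_apply (Fin.succ_ne_zero i).symm))),
    hE.measure_preimage (s := region) (measurableSet_regionBetween measurable_const
      (measurable_pi_apply i) (isClosed_orderPolytope C).measurableSet).nullMeasurableSet,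
    hregion, ENNReal.toReal_ofReal (setIntegral_nonneg (isClosed_orderPolytope C).measurableSet
      fun x hx => (hx.1 i).1)]

/-- The order `σ` with the new element `0` inserted at position `j`. -/
def insertPerm (σ : Equiv.Perm (Fin m)) (j : Fin (m + 1)) : Equiv.Perm (Fin (m + 1)) :=
  (finSuccEquiv' j).trans ((Equiv.optionCongr σ).trans (finSuccEquiv m).symm)

@[simp]
lemma insertPerm_symm_zero (σ : Equiv.Perm (Fin m)) (j : Fin (m + 1)) :
    (insertPerm σ j).symm 0 = j :=
  finSuccEquiv'_symm_none j

@[simp]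
lemma insertPerm_symm_succ (σ : Equiv.Perm (Fin m)) (j : Fin (m + 1)) (a : Fin m) :
    (insertPerm σ j).symm a.succ = j.succAbove (σ.symm a) :=
  finSuccEquiv'_symm_some j (σ.symm a)

lemma insertPerm_injective :
    Injective fun p : Equiv.Perm (Fin m) × Fin (m + 1) => insertPerm p.1 p.2 := by
  rintro ⟨σ, j⟩ ⟨τ, k⟩ h
  have hsymm := congrArg Equiv.symm h
  have hj : j = k := by simpa using congrFun (congrArg DFunLike.coe hsymm) 0
  subst hj
  refine Prod.ext (Equiv.symm_bijective.injective (Equiv.ext fun a => ?_)) rfl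
  simpa using congrFun (congrArg DFunLike.coe hsymm) a.succ

lemma insertPerm_bijective :
    Bijective fun p : Equiv.Perm (Fin m) × Fin (m + 1) => insertPerm p.1 p.2 :=
  (Fintype.bijective_iff_injective_and_card _).2 ⟨insertPerm_injective,
    by simp [Fintype.card_perm, Nat.factorial_succ, mul_comm]⟩

lemma insertPerm_mem_linearExtensions_liftConstraints {C : Finset (Fin m × Fin m)} {i : Fin m}
    {σ : Equiv.Perm (Fin m)} {j : Fin (m + 1)} :
    insertPerm σ j ∈ linearExtensions (liftConstraints C i) ↔
      σ ∈ linearExtensions C ∧ j ≤ (σ.symm i).castSucc := by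
  simp only [linearExtensions, Finset.mem_filter, Finset.mem_univ, true_and,
    forall_mem_liftConstraints (fun a b => (insertPerm σ j).symm a ≤ (insertPerm σ j).symm b),
    insertPerm_symm_zero, insertPerm_symm_succ, Fin.succAbove_le_succAbove_iff]
  rw [(Fin.succAbove_ne j _).symm.le_iff_lt, Fin.lt_succAbove_iff_le_castSucc, and_comm]

lemma card_linearExtensions_liftConstraints (C : Finset (Fin m × Fin m)) (i : Fin m) :
    #(linearExtensions (liftConstraints C i)) =
      ∑ σ ∈ linearExtensions C, ((σ.symm i : ℕ) + 1) := by
  calc #(linearExtensions (liftConstraints C i))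
      = #((linearExtensions C).sigma fun σ => Finset.Iic (σ.symm i).castSucc) := by
        refine (Finset.card_bij (fun p _ => insertPerm p.1 p.2) ?_ ?_ ?_).symm
        · rintro ⟨σ, j⟩ h
          exact insertPerm_mem_linearExtensions_liftConstraints.2 (by simpa using h)
        · rintro ⟨σ, j⟩ _ ⟨τ, k⟩ _ h
          obtain ⟨rfl, rfl⟩ := Prod.ext_iff.1 <|
            insertPerm_injective (a₁ := (σ, j)) (a₂ := (τ, k)) h
          rfl
        · intro τ hτ
          obtain ⟨⟨σ, j⟩, rfl⟩ := insertPerm_bijective.2 τ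
          have hσj := insertPerm_mem_linearExtensions_liftConstraints.1 hτ
          exact ⟨⟨σ, j⟩, by simpa using hσj, rfl⟩
    _ = ∑ σ ∈ linearExtensions C, ((σ.symm i : ℕ) + 1) := by
        simp [Finset.card_sigma]

end OrderPolytope

theorem expected_value_eq_expected_rank_div_general (n : ℕ) (C : Finset (Fin n × Fin n)) (i : Fin n)
    (N r : ℝ)
    (hN : N = Fintype.card {σ : Equiv.Perm (Fin n) // ∀ p ∈ C, σ.symm p.1 ≤ σ.symm p.2})
    (hr : r = (1 / N) * ∑ σ : {σ : Equiv.Perm (Fin n) // ∀ p ∈ C, σ.symm p.1 ≤ σ.symm p.2},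
      (((σ : Equiv.Perm (Fin n)).symm i : ℕ) + 1 : ℝ)) :
    (∫ x in {x : Fin n → ℝ | (∀ j, x j ∈ Set.Icc (0:ℝ) 1) ∧ ∀ p ∈ C, x p.1 ≤ x p.2}, x i) /
      (volume {x : Fin n → ℝ | (∀ j, x j ∈ Set.Icc (0:ℝ) 1) ∧ ∀ p ∈ C, x p.1 ≤ x p.2}).toReal
      = r / (n + 1) := by
  have hN' : N = #(linearExtensions C) := by
    rw [hN, Fintype.card_subtype]; rfl
  have hr' : r = 1 / N * #(linearExtensions (liftConstraints C i)) := by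
    rw [hr, card_linearExtensions_liftConstraints, Finset.sum_subtype (linearExtensions C)
      fun _ => Finset.mem_filter.trans (and_iff_right (Finset.mem_univ _))]
    push_cast
    rfl
  change (∫ x in orderPolytope C, x i) / (volume (orderPolytope C)).toReal = r / (n + 1)
  rw [integral_apply_orderPolytope, volume_orderPolytope, volume_orderPolytope]
  simp only [ENNReal.toReal_div, ENNReal.toReal_natCast, ← hN', hr', Nat.factorial_succ]
  rcases eq_or_ne N 0 with rfl | hN0
  · simp
  · field_simp
    push_cast
    ring

theorem expected_value_eq_expected_rank_div (n : ℕ) (C : Finset (Fin n × Fin n)) (i : Fin n)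
    (hanti : ∀ a b : Fin n, Relation.ReflTransGen (fun a b => (a, b) ∈ C) a b →
      Relation.ReflTransGen (fun a b => (a, b) ∈ C) b a → a = b)
    (N r : ℝ)
    (hN : N = Fintype.card {σ : Equiv.Perm (Fin n) // ∀ p ∈ C, σ.symm p.1 ≤ σ.symm p.2})
    (hr : r = (1 / N) * ∑ σ : {σ : Equiv.Perm (Fin n) // ∀ p ∈ C, σ.symm p.1 ≤ σ.symm p.2},
      (((σ : Equiv.Perm (Fin n)).symm i : ℕ) + 1 : ℝ)) :
    (∫ x in {x : Fin n → ℝ | (∀ j, x j ∈ Set.Icc (0:ℝ) 1) ∧ ∀ p ∈ C, x p.1 ≤ x p.2}, x i) /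
      (volume {x : Fin n → ℝ | (∀ j, x j ∈ Set.Icc (0:ℝ) 1) ∧ ∀ p ∈ C, x p.1 ≤ x p.2}).toReal
      = r / (n + 1) :=
  expected_value_eq_expected_rank_div_general n C i N r hN hr
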